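/- Let B be a closed ball of radius δ in H^d, let a, b ∈ B, and let c ∈ H^d satisfy d(a,c) = d(b,c) = δ. Then the circular arc P_c(a,b) is contained in B, where P_c(a,b) is the set of points g with d(c,g) = δ such that the geodesic segment cg meets the segment ab. -/

import Mathlib

/- We formalize hyperbolic space `H^d` via the Beltrami–Klein model: the open
unit ball of `ℝ^d`, where hyperbolic geodesic segments are exactly Euclidean
segments (so hyperbolic convexity = Euclidean convexity), hyperplanes are
chords of affine hyperplanes, and the hyperbolic distance is given by the
Cayley–Klein formula `cosh d(x,y) = (1 - ⟪x,y⟫)/√((1-‖x‖²)(1-‖y‖²))`. -/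

noncomputable section
open Metric Set RealInnerProductSpace

namespace Hyp

abbrev E (d : ℕ) := EuclideanSpace ℝ (Fin d)

/-- The Klein model of `H^d`: the open unit ball. -/
def ball01 (d : ℕ) : Set (E d) := Metric.ball 0 1

/-- Inverse hyperbolic cosine. -/
def acosh (z : ℝ) : ℝ := Real.log (z + Real.sqrt (z ^ 2 - 1))

/-- Hyperbolic distance in the Beltrami–Klein model. -/
def hDist {d : ℕ} (x y : E d) : ℝ :=
  acosh ((1 - (inner ℝ x y : ℝ)) / (Real.sqrt (1 - ‖x‖ ^ 2) * Real.sqrt (1 - ‖y‖ ^ 2)))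

/-- Hyperbolic diameter of a set. -/
def hDiam {d : ℕ} (C : Set (E d)) : ℝ :=
  sSup {r | ∃ a ∈ C, ∃ b ∈ C, hDist a b = r}

/-- Hyperbolic (infimal) distance between two sets. -/
def hSetDist {d : ℕ} (A B : Set (E d)) : ℝ :=
  sInf {r | ∃ a ∈ A, ∃ b ∈ B, hDist a b = r}

/-- Hyperbolic distance from a point to a set. -/
def hPointDist {d : ℕ} (x : E d) (A : Set (E d)) : ℝ :=
  sInf {r | ∃ a ∈ A, hDist x a = r}

/-- Closed hyperbolic ball of radius `r` about `x`. -/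
def hBall {d : ℕ} (x : E d) (r : ℝ) : Set (E d) :=
  {y ∈ ball01 d | hDist x y ≤ r}

/-- A convex body in `H^d`: compact, convex (hyperbolically, i.e. in the Klein
model also Euclidean-convex), with nonempty interior, inside the model. -/
def IsBody {d : ℕ} (C : Set (E d)) : Prop :=
  IsCompact C ∧ Convex ℝ C ∧ (interior C).Nonempty ∧ C ⊆ ball01 d

/-- A hyperplane of `H^d` in the Klein model: a chord `{x ∈ B | ⟪u,x⟫ = c}` of
the unit ball, with `‖u‖ = 1` and `|c| < 1` (so the chord is nonempty). -/
structure HPlane (d : ℕ) where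
  u : E d
  c : ℝ
  norm_u : ‖u‖ = 1
  abs_c : |c| < 1

/-- The underlying set of points of a hyperplane. -/
def HPlane.carrier {d : ℕ} (H : HPlane d) : Set (E d) :=
  {x ∈ ball01 d | (inner ℝ H.u x : ℝ) = H.c}

/-- `H` supports `C`: they meet and `C` lies in the closed half-space
`⟪u,·⟫ ≤ c` (an orientation of the normal is chosen accordingly). -/
def Supports {d : ℕ} (H : HPlane d) (C : Set (E d)) : Prop :=
  (H.carrier ∩ C).Nonempty ∧ ∀ x ∈ C, (inner ℝ H.u x : ℝ) ≤ H.c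

/-- Two hyperplanes are ultraparallel iff their closures (in `ℝ^d`, hence
including ideal boundary points) are disjoint. -/
def Ultraparallel {d : ℕ} (H K : HPlane d) : Prop :=
  closure H.carrier ∩ closure K.carrier = ∅

/-- The width of `C` determined by a supporting hyperplane `H`: the distance
from `H` to a farthest ultraparallel supporting hyperplane of `C`. -/
def hwidth {d : ℕ} (C : Set (E d)) (H : HPlane d) : ℝ :=
  sSup {r | ∃ K : HPlane d, Ultraparallel H K ∧ Supports K C ∧
    r = hSetDist H.carrier K.carrier}

/-- Thickness: the minimum width over all supporting hyperplanes. -/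
def thickness {d : ℕ} (C : Set (E d)) : ℝ :=
  sInf {r | ∃ H : HPlane d, Supports H C ∧ r = hwidth C H}

/-- A reduced body. -/
def IsReduced {d : ℕ} (R : Set (E d)) : Prop :=
  IsBody R ∧ ∀ Z : Set (E d), IsBody Z → Z ⊆ R → Z ≠ R → thickness Z < thickness R

/-- The equidistant hypersurface to `H` at distance `t`, on the side
`⟪u,·⟫ < c` (the side on which supported bodies lie). -/
def equiSurf {d : ℕ} (H : HPlane d) (t : ℝ) : Set (E d) :=
  {x ∈ ball01 d | (inner ℝ H.u x : ℝ) < H.c ∧ hPointDist x H.carrier = t}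

/-- The distance from `H` to the nearest equidistant hypersurface `E` to `H`
with `C ⊆ conv(H ∪ E)` (the thickness of the equidistant strip `conv(H ∪ E)`). -/
def equiLevel {d : ℕ} (C : Set (E d)) (H : HPlane d) : ℝ :=
  sInf {t | 0 < t ∧ C ⊆ convexHull ℝ (H.carrier ∪ equiSurf H t)}

/-- `E_H(C)`: the nearest equidistant hypersurface to `H` such that `C` is
contained in the equidistant strip `conv(H ∪ E_H(C))`. -/
def EH {d : ℕ} (C : Set (E d)) (H : HPlane d) : Set (E d) :=
  equiSurf H (equiLevel C H)

/-- A body of constant width `δ`. -/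
def ConstWidth {d : ℕ} (C : Set (E d)) (δ : ℝ) : Prop :=
  ∀ H : HPlane d, Supports H C → hwidth C H = δ

/-- A complete set of diameter `δ`: adding any point of `H^d` outside `C`
strictly increases the diameter. -/
def IsComplete {d : ℕ} (C : Set (E d)) (δ : ℝ) : Prop :=
  hDiam C = δ ∧ ∀ x ∈ ball01 d, x ∉ C → hDiam (insert x C) > δ

/-- The circular arc `P_c(a,b)`: points `g` at hyperbolic distance `δ` from `c`
whose (hyperbolic = Euclidean, in the Klein model) segment to `c` meets the
segment `ab`. -/
def arcP {d : ℕ} (c a b : E d) (δ : ℝ) : Set (E d) :=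
  {g ∈ ball01 d | hDist c g = δ ∧ (segment ℝ c g ∩ segment ℝ a b).Nonempty}

/- In the Klein model the locus `{y | hDist q y ≤ hDist c y}` is cut out by an affine inequality
in `y`, so it and its complement are convex. The points `a`, `b` lie on `q`'s side of the bisector
of `q` and `c`, hence so does the point `p` where `[c, g]` meets `[a, b]`. If `g` were outside the
ball about `q`, then `g` and (for `q ≠ c`) `c` would both lie strictly on `c`'s side, and so would
`p`. -/

section InnerProductSpace

variable {F : Type*} [NormedAddCommGroup F] [InnerProductSpace ℝ F]

theorem inner_lt_one {x y : F} (hx : ‖x‖ < 1) (hy : ‖y‖ < 1) : ⟪x, y⟫ < 1 :=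
  (real_inner_le_norm x y).trans_lt (mul_lt_one_of_nonneg_of_lt_one_left (norm_nonneg x) hx hy.le)

theorem sqrt_mul_sqrt_lt_one_sub_inner {x y : F} (hx : ‖x‖ < 1) (hy : ‖y‖ < 1) (hxy : x ≠ y) :
    √(1 - ‖x‖ ^ 2) * √(1 - ‖y‖ ^ 2) < 1 - ⟪x, y⟫ := by
  have hx' : 0 < 1 - ‖x‖ ^ 2 := by nlinarith [norm_nonneg x]
  have identity : (1 - ⟪x, y⟫) ^ 2 - (1 - ‖x‖ ^ 2) * (1 - ‖y‖ ^ 2)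
      = (1 - ‖x‖ ^ 2) * ‖y - x‖ ^ 2 + ⟪x, y - x⟫ ^ 2 := by
    rw [norm_sub_sq_real, inner_sub_right, real_inner_self_eq_norm_sq, real_inner_comm y x]
    ring
  have gap : 0 < (1 - ‖x‖ ^ 2) * ‖y - x‖ ^ 2 :=
    mul_pos hx' (pow_pos (norm_pos_iff.2 (sub_ne_zero.2 hxy.symm)) 2)
  rw [← Real.sqrt_mul hx'.le, Real.sqrt_lt' (sub_pos.2 (inner_lt_one hx hy))]
  nlinarith [sq_nonneg ⟪x, y - x⟫]

end InnerProductSpace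

section KleinModel

variable {d : ℕ}

/-- `(x, 1) / kleinWeight x` is the lift of `x` to the hyperboloid model. -/
def kleinWeight (x : E d) : ℝ := √(1 - ‖x‖ ^ 2)

theorem norm_lt_one_of_mem_ball01 {x : E d} (hx : x ∈ ball01 d) : ‖x‖ < 1 :=
  mem_ball_zero_iff.1 hx

theorem kleinWeight_pos {x : E d} (hx : x ∈ ball01 d) : 0 < kleinWeight x := by
  have := norm_lt_one_of_mem_ball01 hx
  exact Real.sqrt_pos.2 (by nlinarith [norm_nonneg x])

theorem hDist_eq_arcosh (x y : E d) :
    hDist x y = Real.arcosh ((1 - ⟪x, y⟫) / (kleinWeight x * kleinWeight y)) :=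
  rfl

theorem hDist_comm (x y : E d) : hDist x y = hDist y x := by
  rw [hDist_eq_arcosh, hDist_eq_arcosh, real_inner_comm, mul_comm]

theorem hDist_self {x : E d} (hx : x ∈ ball01 d) : hDist x x = 0 := by
  have hw := kleinWeight_pos hx
  have hw_sq : kleinWeight x * kleinWeight x = 1 - ‖x‖ ^ 2 :=
    Real.mul_self_sqrt (Real.sqrt_pos.1 hw).le
  rw [hDist_eq_arcosh, real_inner_self_eq_norm_sq, hw_sq, div_self (Real.sqrt_pos.1 hw).ne',
    Real.arcosh_zero]

theorem hDist_pos {x y : E d} (hx : x ∈ ball01 d) (hy : y ∈ ball01 d) (hxy : x ≠ y) :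
    0 < hDist x y := by
  rw [hDist_eq_arcosh]
  refine Real.arcosh_pos ((one_lt_div (mul_pos (kleinWeight_pos hx) (kleinWeight_pos hy))).2 ?_)
  exact sqrt_mul_sqrt_lt_one_sub_inner (norm_lt_one_of_mem_ball01 hx)
    (norm_lt_one_of_mem_ball01 hy) hxy

/-- The hyperbolic bisector of `q` and `c` is the chord of an affine hyperplane. -/
theorem hDist_le_hDist_iff {q c y : E d} (hq : q ∈ ball01 d) (hc : c ∈ ball01 d)
    (hy : y ∈ ball01 d) :
    hDist q y ≤ hDist c y ↔
      ⟪kleinWeight q • c - kleinWeight c • q, y⟫ ≤ kleinWeight q - kleinWeight c := by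
  have hwq := kleinWeight_pos hq
  have hwc := kleinWeight_pos hc
  have hwy := kleinWeight_pos hy
  have inner_pos {x : E d} (hx : x ∈ ball01 d) : 0 < 1 - ⟪x, y⟫ :=
    sub_pos.2 (inner_lt_one (norm_lt_one_of_mem_ball01 hx) (norm_lt_one_of_mem_ball01 hy))
  have cross_diff : (1 - ⟪c, y⟫) * (kleinWeight q * kleinWeight y)
        - (1 - ⟪q, y⟫) * (kleinWeight c * kleinWeight y)
      = kleinWeight y * (kleinWeight q - kleinWeight c
        - ⟪kleinWeight q • c - kleinWeight c • q, y⟫) := by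
    rw [inner_sub_left, real_inner_smul_left, real_inner_smul_left]
    ring
  rw [hDist_eq_arcosh, hDist_eq_arcosh,
    Real.arcosh_le_arcosh (div_pos (inner_pos hq) (by positivity))
      (div_pos (inner_pos hc) (by positivity)),
    div_le_div_iff₀ (by positivity) (by positivity), ← sub_nonneg, cross_diff,
    mul_nonneg_iff_of_pos_left hwy, sub_nonneg]

theorem convex_setOf_hDist_le_hDist {q c : E d} (hq : q ∈ ball01 d) (hc : c ∈ ball01 d) :
    Convex ℝ {y ∈ ball01 d | hDist q y ≤ hDist c y} := by
  have half_space : {y ∈ ball01 d | hDist q y ≤ hDist c y} = ball01 d ∩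
      {y | ⟪kleinWeight q • c - kleinWeight c • q, y⟫ ≤ kleinWeight q - kleinWeight c} := by
    ext y
    exact and_congr_right (hDist_le_hDist_iff hq hc)
  rw [half_space]
  exact (convex_ball 0 1).inter (convex_halfSpace_le (innerₛₗ ℝ _).isLinear _)

theorem convex_setOf_hDist_lt_hDist {q c : E d} (hq : q ∈ ball01 d) (hc : c ∈ ball01 d) :
    Convex ℝ {y ∈ ball01 d | hDist c y < hDist q y} := by
  have half_space : {y ∈ ball01 d | hDist c y < hDist q y} = ball01 d ∩
      {y | kleinWeight q - kleinWeight c < ⟪kleinWeight q • c - kleinWeight c • q, y⟫} := by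
    ext y
    exact and_congr_right fun hy ↦ not_le.symm.trans ((hDist_le_hDist_iff hq hc hy).not.trans not_le)
  rw [half_space]
  exact (convex_ball 0 1).inter (convex_halfSpace_gt (innerₛₗ ℝ _).isLinear _)

end KleinModel

/-- If `a, b` lie in a closed ball `B` of radius `δ` and `c` is at distance
`δ` from both, then the arc `P_c(a,b)` is contained in `B`. -/
theorem arcP_subset_ball {d : ℕ} (q c a b : E d) (δ : ℝ)
    (hq : q ∈ ball01 d) (hc : c ∈ ball01 d)
    (ha : a ∈ hBall q δ) (hb : b ∈ hBall q δ)
    (hac : hDist a c = δ) (hbc : hDist b c = δ) :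
    arcP c a b δ ⊆ hBall q δ := by
  rintro g ⟨hg, hcg, p, hp_cg, hp_ab⟩
  refine ⟨hg, ?_⟩
  obtain rfl | hqc := eq_or_ne q c
  · exact hcg.le
  by_contra hgq
  have near_q {x : E d} (hx : x ∈ hBall q δ) (hxc : hDist x c = δ) :
      x ∈ {y ∈ ball01 d | hDist q y ≤ hDist c y} :=
    ⟨hx.1, hx.2.trans ((hDist_comm c x).trans hxc).ge⟩
  have hp_near : p ∈ {y ∈ ball01 d | hDist q y ≤ hDist c y} :=
    (convex_setOf_hDist_le_hDist hq hc).segment_subset (near_q ha hac) (near_q hb hbc) hp_ab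
  have hp_far : p ∈ {y ∈ ball01 d | hDist c y < hDist q y} :=
    (convex_setOf_hDist_lt_hDist hq hc).segment_subset
      ⟨hc, (hDist_self hc).trans_lt (hDist_pos hq hc hqc)⟩
      ⟨hg, hcg.trans_lt (not_le.1 hgq)⟩ hp_cg
  exact hp_far.2.not_ge hp_near.2

end Hyp
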